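/- arXiv:2401.02751 — 7 statements merged into one kernel-verified Lean document; each statement's English description precedes it below -/
import Mathlib

section
/- Let R be a Noetherian ring, S a Noetherian ring, f : R → S a ring homomorphism, and M a finitely generated S-module. Then the set of primes of R associated to M (viewed as an R-module via f) equals the set of contractions f⁻¹(Q) for Q ranging over the S-associated primes of M. In particular, Ass_R M is finite. -/
/-!
Write `P = ann_R x`. Among the `S`-annihilators of the elements `z` with `ann_R z = P`, take a
maximal one, `Q = ann_S z`. For `r ∉ P` the element `f r • z` again has `ann_R = P`, hence
`ann_S = Q` by maximality; this forces `ann_R (a • z) = P` whenever `a ∉ Q`, and maximality once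
more shows that `Q` is prime. Its contraction is `ann_R z = P`. Conversely the contraction of
`ann_S x` is `ann_R x`. Finiteness then follows from the finiteness of `Ass_S M`.
-/

open Ideal

namespace Ideal

section Ring

variable {R M : Type*} [CommRing R] [AddCommGroup M] [Module R M]

theorem isAssociatedPrime_iff_exists_eq_torsionOf [IsNoetherianRing R] {I : Ideal R} :
    IsAssociatedPrime I M ↔ I.IsPrime ∧ ∃ x : M, I = torsionOf R M x := by
  have colon_eq (x : M) : (⊥ : Submodule R M).colon {x} = torsionOf R M x := by
    ext r
    simp [Submodule.mem_colon_singleton]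
  simp only [isAssociatedPrime_iff, colon_eq]

theorem torsionOf_smul_of_notMem {P : Ideal R} [P.IsPrime] {x : M} (hx : torsionOf R M x = P)
    {r : R} (hr : r ∉ P) : torsionOf R M (r • x) = P := by
  ext a
  rw [mem_torsionOf_iff, smul_smul, ← mem_torsionOf_iff, hx, IsPrime.mul_mem_right_iff hr]

theorem torsionOf_le_torsionOf_smul (r : R) (x : M) : torsionOf R M x ≤ torsionOf R M (r • x) :=
  fun a ha => by rw [mem_torsionOf_iff, smul_comm, (mem_torsionOf_iff x a).1 ha, smul_zero]

end Ring

section RingHom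

variable {R S M : Type*} [CommRing R] [CommRing S] [AddCommGroup M] [Module R M] [Module S M]
  {f : R →+* S}

theorem comap_torsionOf_of_smul_eq (hf : ∀ (r : R) (m : M), r • m = f r • m) (x : M) :
    (torsionOf S M x).comap f = torsionOf R M x := by
  ext r
  simp [hf]

theorem torsionOf_le_torsionOf_smul_of_smul_eq (hf : ∀ (r : R) (m : M), r • m = f r • m)
    (s : S) (x : M) : torsionOf R M x ≤ torsionOf R M (s • x) := by
  rw [← comap_torsionOf_of_smul_eq hf, ← comap_torsionOf_of_smul_eq hf]
  exact comap_mono (torsionOf_le_torsionOf_smul s x)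

theorem isPrime_torsionOf_of_maximal (hf : ∀ (r : R) (m : M), r • m = f r • m) {P : Ideal R}
    [P.IsPrime] {z : M} (hz : torsionOf R M z = P)
    (hmax : ∀ w : M, torsionOf R M w = P → torsionOf S M z ≤ torsionOf S M w →
      torsionOf S M w = torsionOf S M z) :
    (torsionOf S M z).IsPrime := by
  refine ⟨fun htop => ?_, fun {a b} hab => or_iff_not_imp_left.2 fun ha => ?_⟩
  · rw [torsionOf_eq_top_iff] at htop
    rw [htop, torsionOf_zero] at hz
    exact IsPrime.ne_top ‹_› hz.symm
  · have haz : torsionOf R M (a • z) = P := by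
      refine le_antisymm (fun r hr => ?_) (hz ▸ torsionOf_le_torsionOf_smul_of_smul_eq hf a z)
      by_contra hrP
      have hrz : torsionOf S M (f r • z) = torsionOf S M z :=
        hmax _ (hf r z ▸ torsionOf_smul_of_notMem hz hrP) (torsionOf_le_torsionOf_smul _ z)
      apply ha
      rw [← hrz, mem_torsionOf_iff, smul_comm, ← hf]
      exact hr
    rw [← hmax _ haz (torsionOf_le_torsionOf_smul a z), mem_torsionOf_iff, smul_smul, mul_comm]
    exact hab

theorem exists_isAssociatedPrime_comap_eq [IsNoetherianRing S]
    (hf : ∀ (r : R) (m : M), r • m = f r • m) {P : Ideal R} [P.IsPrime] {x : M}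
    (hx : torsionOf R M x = P) : ∃ Q : Ideal S, IsAssociatedPrime Q M ∧ Q.comap f = P := by
  obtain ⟨_, ⟨z, hz, rfl⟩, hmax⟩ := set_has_maximal_iff_noetherian.2 inferInstance
    ((torsionOf S M ·) '' {z | torsionOf R M z = P}) ⟨_, x, hx, rfl⟩
  have hprime := isPrime_torsionOf_of_maximal hf hz
    fun w hw hle => (hle.eq_of_not_lt (hmax _ ⟨w, hw, rfl⟩)).symm
  exact ⟨_, isAssociatedPrime_iff_exists_eq_torsionOf.2 ⟨hprime, z, rfl⟩,
    by rw [comap_torsionOf_of_smul_eq hf, hz]⟩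

theorem associatedPrimes_eq_image_comap [IsNoetherianRing R] [IsNoetherianRing S]
    (hf : ∀ (r : R) (m : M), r • m = f r • m) :
    associatedPrimes R M = comap f '' associatedPrimes S M := by
  ext P
  constructor
  · intro hP
    obtain ⟨hPp, x, rfl⟩ := isAssociatedPrime_iff_exists_eq_torsionOf.1 hP
    exact exists_isAssociatedPrime_comap_eq hf rfl
  · rintro ⟨Q, hQ, rfl⟩
    obtain ⟨hQp, x, rfl⟩ := isAssociatedPrime_iff_exists_eq_torsionOf.1 hQ
    have hprime := comap_isPrime f (torsionOf S M x)
    rw [comap_torsionOf_of_smul_eq hf] at hprime ⊢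
    exact isAssociatedPrime_iff_exists_eq_torsionOf.2 ⟨hprime, x, rfl⟩

end RingHom

end Ideal

/-- Let `R`, `S` be Noetherian commutative rings, `f : R → S` a ring homomorphism and `M`
a finitely generated `S`-module, regarded as an `R`-module via `f` (encoded by the
hypothesis `hcomp`).  Then the `R`-associated primes of `M` are exactly the contractions
along `f` of the `S`-associated primes of `M`; in particular `Ass_R M` is finite. -/
theorem stmt0 (R S : Type) [CommRing R] [CommRing S] [IsNoetherianRing R] [IsNoetherianRing S]
    (f : R →+* S) (M : Type) [AddCommGroup M] [Module S M] [Module.Finite S M]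
    [Module R M] (hcomp : ∀ (r : R) (m : M), r • m = f r • m) :
    associatedPrimes R M = (fun Q => Ideal.comap f Q) '' associatedPrimes S M ∧
      (associatedPrimes R M).Finite := by
  have hass := associatedPrimes_eq_image_comap hcomp
  exact ⟨hass, hass ▸ (associatedPrimes.finite S M).image _⟩
end

section
/- Let R be a standard graded Noetherian ring with R_0 = A, and let X = ⨁_n X_n be a graded R-module with each X_n a finitely generated A-module, X_n = 0 for n ≪ 0, and such that H⁰_{R₊}(X)_n = 0 for all n ≫ 0 (X is quasi-finite). Then Ass_A X_n ⊆ Ass_A X_{n+1} for all n ≫ 0. -/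
/-!
Let `p = ann_A x` with `x ∈ X_n`, and consider the `A`-submodule `T = R₁ x ⊆ X_{n+1}`. Clearly
`p` kills `T`; conversely, if `a` kills `T` then `R₊ (a x) = 0`, so `a x ∈ H⁰_{R₊}(X)_n`, which
vanishes for `n ≫ 0`, hence `a ∈ p`. Thus `T` is a finitely generated `A`-module whose annihilator
is the prime `p`, so `p`, being a minimal prime of `ann T`, is associated to `T ⊆ X_{n+1}`.
-/

/-- The `I`-torsion submodule `H⁰_I(X) = { x | I^k x = 0 for some k }`. -/
def H0 {R : Type} [CommRing R] (I : Ideal R) (X : Type) [AddCommGroup X] [Module R X] :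
    Submodule R X :=
  ⨆ k : ℕ, Submodule.torsionBySet R X ((I ^ k : Ideal R) : Set R)

open Submodule

theorem mem_H0_span_of_forall_smul_eq_zero {R X : Type} [CommRing R] [AddCommGroup X]
    [Module R X] {S : Set R} {y : X} (h : ∀ r ∈ S, r • y = 0) : y ∈ H0 (Ideal.span S) X :=
  mem_iSup_of_mem 1 <| by
    rw [pow_one, ← torsionBySet_eq_torsionBySet_span]
    exact (mem_torsionBySet_iff _ _).2 fun r => h r r.2

theorem mem_associatedPrimes_of_annihilator_eq {A M : Type*} [CommRing A] [IsNoetherianRing A]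
    [AddCommGroup M] [Module A M] [Module.Finite A M] {p : Ideal A} [p.IsPrime]
    (h : Module.annihilator A M = p) : p ∈ associatedPrimes A M :=
  Module.associatedPrimes.minimalPrimes_annihilator_subset_associatedPrimes A M <| by
    rw [h, Ideal.minimalPrimes_eq_subsingleton_self]
    rfl

theorem annihilator_span_smul_eq_of_inf_H0_eq_bot {A R X : Type} [CommRing A] [CommRing R]
    [Algebra A R] [AddCommGroup X] [Module A X] [Module R X] [IsScalarTower A R X] {S : Set R}
    {M : Submodule A X} (hM : (H0 (Ideal.span S) X).restrictScalars A ⊓ M = ⊥) {x : X}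
    (hx : x ∈ M) : (span A ((· • x) '' S)).annihilator = (span A {x}).annihilator := by
  ext a
  rw [mem_annihilator_span, mem_annihilator_span_singleton]
  simp only [Subtype.forall, Set.forall_mem_image]
  constructor
  · intro h
    have hax : a • x ∈ (H0 (Ideal.span S) X).restrictScalars A ⊓ M :=
      ⟨mem_H0_span_of_forall_smul_eq_zero fun r hr => by rw [smul_comm]; exact h hr,
        M.smul_mem a hx⟩
    simpa [hM] using hax
  · intro h r _
    rw [smul_comm, h, smul_zero]

theorem stmt2_general (A : Type) [CommRing A] [IsNoetherianRing A]
    (R : Type) [CommRing R] [Algebra A R]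
    (𝒜 : ℕ → Submodule A R)
    (X : Type) [AddCommGroup X] [Module A X] [Module R X] [IsScalarTower A R X]
    (ℳ : ℤ → Submodule A X)
    (hsmul : ∀ (i : ℕ) (n : ℤ), ∀ r ∈ 𝒜 i, ∀ x ∈ ℳ n, r • x ∈ ℳ (n + i))
    (hfg : ∀ n, (ℳ n).FG)
    (hqf : ∃ N : ℤ, ∀ n ≥ N,
      (H0 (Ideal.span (𝒜 1 : Set R)) X).restrictScalars A ⊓ ℳ n = ⊥) :
    ∃ N : ℤ, ∀ n ≥ N, associatedPrimes A (ℳ n) ⊆ associatedPrimes A (ℳ (n + 1)) := by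
  obtain ⟨N, hN⟩ := hqf
  refine ⟨N, fun n hn p hp => ?_⟩
  obtain ⟨hprime, x, rfl⟩ := isAssociatedPrime_iff.1 hp
  set T := span A ((· • (x : X)) '' (𝒜 1 : Set R))
  have hT : T ≤ ℳ (n + 1) := span_le.2 <| by
    rintro _ ⟨r, hr, rfl⟩
    exact_mod_cast hsmul 1 n r hr x x.2
  have : Module.Finite A (ℳ (n + 1)) := Module.Finite.iff_fg.2 (hfg _)
  have : Module.Finite A T := Module.Finite.of_injective (inclusion hT) (inclusion_injective hT)
  have hann : Module.annihilator A T = colon ⊥ {x} := by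
    ext a
    rw [← Submodule.annihilator, annihilator_span_smul_eq_of_inf_H0_eq_bot (hN n hn) x.2,
      mem_annihilator_span_singleton, mem_colon_singleton, mem_bot, ← coe_smul, coe_eq_zero]
  exact associatedPrimes.subset_of_injective (inclusion_injective hT)
    (mem_associatedPrimes_of_annihilator_eq hann)

/-- Let `R` be a standard graded Noetherian ring with `R_0 = A` and `X = ⨁ X_n` a graded
`R`-module with finitely generated components vanishing in low degrees, which is
quasi-finite: `H⁰_{R₊}(X)_n = 0` for all `n ≫ 0`.  Then `Ass_A X_n ⊆ Ass_A X_{n+1}`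
for all `n ≫ 0`. -/
theorem stmt2 (A : Type) [CommRing A] [IsNoetherianRing A]
    (R : Type) [CommRing R] [Algebra A R] [IsNoetherianRing R]
    (𝒜 : ℕ → Submodule A R) [GradedAlgebra 𝒜] (hstd : ∀ n, 𝒜 n = 𝒜 1 ^ n)
    (X : Type) [AddCommGroup X] [Module A X] [Module R X] [IsScalarTower A R X]
    (ℳ : ℤ → Submodule A X) [DirectSum.Decomposition ℳ]
    (hsmul : ∀ (i : ℕ) (n : ℤ), ∀ r ∈ 𝒜 i, ∀ x ∈ ℳ n, r • x ∈ ℳ (n + i))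
    (hfg : ∀ n, (ℳ n).FG) (hvan : ∃ n₀ : ℤ, ∀ n < n₀, ℳ n = ⊥)
    (hqf : ∃ N : ℤ, ∀ n ≥ N,
      (H0 (Ideal.span (𝒜 1 : Set R)) X).restrictScalars A ⊓ ℳ n = ⊥) :
    ∃ N : ℤ, ∀ n ≥ N, associatedPrimes A (ℳ n) ⊆ associatedPrimes A (ℳ (n + 1)) :=
  stmt2_general A R 𝒜 X ℳ hsmul hfg hqf
end

section
/- Let R be a standard graded Noetherian ring with R_0 = A and let X be a graded R-module with finitely generated components vanishing in low degrees. Set Y = X / H⁰_{R₊}(X). Then Ass_A X = Ass_A Y ∪ Ass_A H⁰_{R₊}(X). Moreover, if P ∈ Ass_A Y_s for some s, then P ∈ Ass_A X_{s+r} for some r ≥ 1. -/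
open Pointwise Submodule

theorem Submodule.colon_bot_singleton_coe {A M : Type*} [CommRing A] [AddCommGroup M]
    [Module A M] {N : Submodule A M} (y : N) :
    (⊥ : Submodule A M).colon {(y : M)} = (⊥ : Submodule A N).colon {y} := by
  ext a
  simp only [mem_colon_singleton, mem_bot, ← coe_smul, ZeroMemClass.coe_eq_zero]

theorem Submodule.colon_bot_singleton_mkQ {A M : Type*} [CommRing A] [AddCommGroup M]
    [Module A M] (N : Submodule A M) (x : M) :
    (⊥ : Submodule A (M ⧸ N)).colon {N.mkQ x} = N.colon {x} := by
  ext a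
  simp only [mem_colon_singleton, mem_bot, mkQ_apply, ← Quotient.mk_smul, Quotient.mk_eq_zero]

section TorsionSubmodule

variable {A R X : Type} [CommRing A] [CommRing R] [Algebra A R] [AddCommGroup X] [Module A X]
  [Module R X] [IsScalarTower A R X]

theorem exists_le_torsionBySet_pow_of_fg {I : Ideal R} {N : Submodule A X} (hN : N.FG)
    (h : N ≤ (H0 I X).restrictScalars A) :
    ∃ k, N ≤ (torsionBySet R X (I ^ k : Ideal R)).restrictScalars A := by
  have hmono : Monotone fun k : ℕ => (torsionBySet R X (I ^ k : Ideal R)).restrictScalars A :=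
    fun i j hij => torsionBySet_le_torsionBySet_of_subset (Ideal.pow_le_pow_right hij)
  rw [H0, restrictScalars_iSup] at h
  obtain ⟨_, ⟨k, rfl⟩, hk⟩ := (fg_iff_compact N).1 hN _ _ (Set.range_nonempty _)
    hmono.directed_le.directedOn_range isLUB_iSup h
  exact ⟨k, hk⟩

theorem exists_pow_colon_smul_eq [IsNoetherianRing A] [IsNoetherianRing R] {S : Set R}
    {P : Ideal A} (hP : P.IsPrime) {x : X}
    (hx : P = ((H0 (Ideal.span S) X).restrictScalars A).colon {x}) :
    ∃ k₀, ∀ k ≥ k₀, ∃ g ∈ S ^ k, P = (⊥ : Submodule A X).colon {g • x} := by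
  have hIk (k : ℕ) : Ideal.span S ^ k = span R (S ^ k) := by
    rw [← Ideal.submodule_span_eq, span_pow]
  obtain ⟨k₀, hk₀⟩ := exists_le_torsionBySet_pow_of_fg (I := Ideal.span S)
    ((IsNoetherian.noetherian P).map (LinearMap.toSpanSingleton A X x))
    (by rintro _ ⟨a, ha, rfl⟩; exact mem_colon_singleton.1 (hx ▸ ha))
  refine ⟨k₀, fun k hk => ?_⟩
  obtain ⟨T, hTS, hT⟩ := (fg_span_iff_fg_span_finset_subset (S ^ k)).1
    (by rw [← hIk]; exact IsNoetherian.noetherian _)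
  have hle_colon (g : R) (hg : g ∈ Ideal.span S ^ k) : P ≤ (⊥ : Submodule A X).colon {g • x} := by
    intro a ha
    have hax : a • x ∈ torsionBySet R X (Ideal.span S ^ k₀ : Ideal R) := hk₀ ⟨a, ha, rfl⟩
    rw [mem_colon_singleton, mem_bot, smul_comm]
    exact (mem_torsionBySet_iff _ _).1 hax ⟨g, Ideal.pow_le_pow_right hk hg⟩
  have hinf_le : T.inf (fun g => (⊥ : Submodule A X).colon {g • x}) ≤ P := by
    intro b hb
    have hIk_le : Ideal.span S ^ k ≤ (⊥ : Submodule R X).colon {b • x} := by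
      rw [hIk, hT, span_le]
      intro g hg
      simpa [smul_comm b g x] using mem_finsetInf.1 hb g hg
    rw [hx, mem_colon_singleton, restrictScalars_mem, H0]
    refine mem_iSup_of_mem k ((mem_torsionBySet_iff _ _).2 fun ⟨g, hg⟩ => ?_)
    simpa using hIk_le hg
  obtain ⟨g, hgT, hgP⟩ := hP.inf_le'.1 hinf_le
  exact ⟨g, hTS hgT, le_antisymm (hle_colon g (hIk k ▸ subset_span (hTS hgT))) hgP⟩

end TorsionSubmodule

theorem stmt3_general (A : Type) [CommRing A] [IsNoetherianRing A]
    (R : Type) [CommRing R] [Algebra A R] [IsNoetherianRing R]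
    (𝒜 : ℕ → Submodule A R) (hstd : ∀ n, 𝒜 n = 𝒜 1 ^ n)
    (X : Type) [AddCommGroup X] [Module A X] [Module R X] [IsScalarTower A R X]
    (ℳ : ℤ → Submodule A X)
    (hsmul : ∀ (i : ℕ) (n : ℤ), ∀ r ∈ 𝒜 i, ∀ x ∈ ℳ n, r • x ∈ ℳ (n + i)) :
    associatedPrimes A X =
      associatedPrimes A (X ⧸ ((H0 (Ideal.span (𝒜 1 : Set R)) X).restrictScalars A)) ∪
        associatedPrimes A ↥((H0 (Ideal.span (𝒜 1 : Set R)) X).restrictScalars A) ∧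
    ∀ (P : Ideal A) (s : ℤ),
      P ∈ associatedPrimes A
        ↥((ℳ s).map (((H0 (Ideal.span (𝒜 1 : Set R)) X).restrictScalars A).mkQ)) →
      ∃ r : ℤ, 1 ≤ r ∧ P ∈ associatedPrimes A (ℳ (s + r)) := by
  set H := (H0 (Ideal.span (𝒜 1 : Set R)) X).restrictScalars A
  have hquot_subset : associatedPrimes A (X ⧸ H) ⊆ associatedPrimes A X := by
    intro P hPa
    obtain ⟨hP, y, hy⟩ := isAssociatedPrime_iff.1 hPa
    obtain ⟨x, rfl⟩ := H.mkQ_surjective y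
    rw [colon_bot_singleton_mkQ] at hy
    obtain ⟨k₀, hk₀⟩ := exists_pow_colon_smul_eq hP hy
    obtain ⟨g, -, hg⟩ := hk₀ k₀ le_rfl
    exact isAssociatedPrime_iff.2 ⟨hP, g • x, hg⟩
  refine ⟨subset_antisymm ?_ (Set.union_subset hquot_subset
    (associatedPrimes.subset_of_injective H.injective_subtype)), ?_⟩
  · rw [Set.union_comm]
    exact associatedPrimes.subset_union_of_exact H.injective_subtype
      (LinearMap.exact_subtype_mkQ H)
  · intro P s hPa
    obtain ⟨hP, ⟨_, x, hxs, rfl⟩, hy⟩ := isAssociatedPrime_iff.1 hPa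
    rw [← colon_bot_singleton_coe, colon_bot_singleton_mkQ] at hy
    obtain ⟨k₀, hk₀⟩ := exists_pow_colon_smul_eq hP hy
    obtain ⟨g, hg, hPg⟩ := hk₀ (k₀ + 1) k₀.le_succ
    have hgx : g • x ∈ ℳ (s + (k₀ + 1 : ℕ)) :=
      hsmul _ s g (hstd _ ▸ pow_subset_pow _ hg) x hxs
    refine ⟨(k₀ + 1 : ℕ), by omega, isAssociatedPrime_iff.2 ⟨hP, ⟨g • x, hgx⟩, ?_⟩⟩
    rwa [← colon_bot_singleton_coe]

/-- Let `R` be a standard graded Noetherian ring with `R_0 = A` and `X` a graded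
`R`-module with finitely generated components vanishing in low degrees.  Set
`Y = X / H⁰_{R₊}(X)`.  Then `Ass_A X = Ass_A Y ∪ Ass_A H⁰_{R₊}(X)`, and moreover if
`P ∈ Ass_A Y_s` then `P ∈ Ass_A X_{s+r}` for some `r ≥ 1`. -/
theorem stmt3 (A : Type) [CommRing A] [IsNoetherianRing A]
    (R : Type) [CommRing R] [Algebra A R] [IsNoetherianRing R]
    (𝒜 : ℕ → Submodule A R) [GradedAlgebra 𝒜] (hstd : ∀ n, 𝒜 n = 𝒜 1 ^ n)
    (X : Type) [AddCommGroup X] [Module A X] [Module R X] [IsScalarTower A R X]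
    (ℳ : ℤ → Submodule A X) [DirectSum.Decomposition ℳ]
    (hsmul : ∀ (i : ℕ) (n : ℤ), ∀ r ∈ 𝒜 i, ∀ x ∈ ℳ n, r • x ∈ ℳ (n + i))
    (hfg : ∀ n, (ℳ n).FG) (hvan : ∃ n₀ : ℤ, ∀ n < n₀, ℳ n = ⊥) :
    associatedPrimes A X =
      associatedPrimes A (X ⧸ ((H0 (Ideal.span (𝒜 1 : Set R)) X).restrictScalars A)) ∪
        associatedPrimes A ↥((H0 (Ideal.span (𝒜 1 : Set R)) X).restrictScalars A) ∧
    ∀ (P : Ideal A) (s : ℤ),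
      P ∈ associatedPrimes A
        ↥((ℳ s).map (((H0 (Ideal.span (𝒜 1 : Set R)) X).restrictScalars A).mkQ)) →
      ∃ r : ℤ, 1 ≤ r ∧ P ∈ associatedPrimes A (ℳ (s + r)) :=
  stmt3_general A R 𝒜 hstd X ℳ hsmul
end

section
/- Let R be a standard graded Noetherian ring with R_0 = A and let X ∈ *Mod_f(R). Assume Ass_A X is a finite set and that the sets Ass_A H⁰_{R₊}(X)_n are eventually constant in n. Then the sets Ass_A X_n are eventually constant: there exists n₀ with Ass_A X_n = Ass_A X_{n₀} for all n ≥ n₀. -/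
open Filter Submodule

section torsion

variable {R X : Type} [CommRing R] [AddCommGroup X] [Module R X] {I : Ideal R} {z : X}

theorem monotone_torsionBySet_pow (I : Ideal R) :
    Monotone fun k : ℕ => torsionBySet R X ((I ^ k : Ideal R) : Set R) :=
  fun _ _ hkl => torsionBySet_le_torsionBySet_of_subset (Ideal.pow_le_pow_right hkl)

theorem mem_H0_iff_exists_mem_torsionBySet :
    z ∈ H0 I X ↔ ∃ k : ℕ, z ∈ torsionBySet R X ((I ^ k : Ideal R) : Set R) :=
  mem_iSup_of_directed _ (monotone_torsionBySet_pow I).directed_le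

theorem mem_torsionBySet_iff_le_colon {J : Ideal R} :
    z ∈ torsionBySet R X (J : Set R) ↔ J ≤ (⊥ : Submodule R X).colon {z} := by
  simp [mem_torsionBySet_iff, SetLike.le_def, mem_colon_singleton]

theorem mem_H0_iff_le_radical (hI : I.FG) :
    z ∈ H0 I X ↔ I ≤ ((⊥ : Submodule R X).colon {z}).radical := by
  simp only [mem_H0_iff_exists_mem_torsionBySet, mem_torsionBySet_iff_le_colon]
  exact ⟨fun ⟨k, hk⟩ g hg => ⟨k, hk (Ideal.pow_mem_pow hg k)⟩,
    fun h => Ideal.exists_pow_le_of_le_radical_of_fg h hI⟩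

theorem mem_H0_of_le_colon (hI : I.FG) (h : I ≤ (H0 I X).colon {z}) : z ∈ H0 I X := by
  rw [mem_H0_iff_le_radical hI]
  intro g hg
  obtain ⟨m, hm⟩ := (mem_H0_iff_le_radical hI).mp (mem_colon_singleton.mp (h hg)) hg
  refine ⟨m + 1, ?_⟩
  rw [mem_colon_singleton, pow_succ, mul_smul]
  exact mem_colon_singleton.mp hm

end torsion

section colon

variable {A R X : Type} [CommRing A] [CommRing R] [Algebra A R]
  [AddCommGroup X] [Module A X] [Module R X] [IsScalarTower A R X]

theorem exists_colon_H0_le_colon_torsionBySet_pow [IsNoetherianRing A] (I : Ideal R) (x : X) :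
    ∃ t : ℕ, ((H0 I X).restrictScalars A).colon {x} ≤
      ((torsionBySet R X ((I ^ t : Ideal R) : Set R)).restrictScalars A).colon {x} := by
  let J : ℕ →o Ideal A :=
    ⟨fun k => ((torsionBySet R X ((I ^ k : Ideal R) : Set R)).restrictScalars A).colon {x},
      fun _ _ hkl => colon_mono (monotone_torsionBySet_pow I hkl) le_rfl⟩
  obtain ⟨t, ht⟩ := monotone_stabilizes_iff_noetherian.mpr inferInstance J
  refine ⟨t, fun a ha => ?_⟩
  obtain ⟨k, hk⟩ :=
    mem_H0_iff_exists_mem_torsionBySet.mp (show a • x ∈ H0 I X from mem_colon_singleton.mp ha)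
  change a ∈ J t
  rw [ht (max t k) (le_max_left t k)]
  exact J.monotone (le_max_right t k) (mem_colon_singleton.mpr hk)

theorem exists_mem_colon_H0_smul_eq {p : Ideal A} [p.IsPrime] {S : Set R}
    (hI : (Ideal.span S).FG) {x : X}
    (hx : ((H0 (Ideal.span S) X).restrictScalars A).colon {x} = p) :
    ∃ r ∈ S, ((H0 (Ideal.span S) X).restrictScalars A).colon {r • x} = p := by
  set H := H0 (Ideal.span S) X
  by_contra! hne
  have hwit : ∀ r ∈ S, ∃ a ∉ p, a • r • x ∈ H := by
    intro r hr
    have hle : p ≤ (H.restrictScalars A).colon {r • x} := fun a ha => by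
      rw [← hx, mem_colon_singleton] at ha
      rw [mem_colon_singleton, smul_comm]
      exact H.smul_mem r ha
    obtain ⟨a, ha, hap⟩ := SetLike.exists_of_lt (lt_of_le_of_ne hle (hne r hr).symm)
    exact ⟨a, hap, mem_colon_singleton.mp ha⟩
  obtain ⟨S', hS'S, hspan⟩ := (fg_span_iff_fg_span_finset_subset S).mp hI
  simp only [Ideal.submodule_span_eq] at hspan
  choose! a ha_not_mem ha_mem using hwit
  set b := ∏ r ∈ S', a r
  have hb : b ∈ p.primeCompl := p.primeCompl.prod_mem fun r hr => ha_not_mem r (hS'S hr)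
  have hbx : b • x ∈ H := by
    refine mem_H0_of_le_colon hI (hspan.trans_le (Ideal.span_le.mpr fun r hr => ?_))
    obtain ⟨c, hc⟩ : a r ∣ b := Finset.dvd_prod_of_mem a hr
    rw [SetLike.mem_coe, mem_colon_singleton, ← smul_comm, hc, mul_comm, mul_smul]
    exact H.smul_of_tower_mem c (ha_mem r (hS'S hr))
  exact hb (hx ▸ mem_colon_singleton.mpr hbx)

end colon

theorem mem_associatedPrimes_of_colon_eq {A X : Type} [CommRing A] [AddCommGroup X] [Module A X]
    {p : Ideal A} [hp : p.IsPrime] {N : Submodule A X} {y : X} (hy : y ∈ N)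
    (h : (⊥ : Submodule A X).colon {y} = p) : p ∈ associatedPrimes A N := by
  refine ⟨hp, ⟨y, hy⟩, ?_⟩
  rw [hp.radical.symm, ← h]
  congr 1
  ext a
  simp [mem_colon_singleton]

theorem mem_associatedPrimes_inf_or_exists_colon_eq {A X : Type} [CommRing A]
    [IsNoetherianRing A] [AddCommGroup X] [Module A X] {p : Ideal A} {H M : Submodule A X}
    (hpM : p ∈ associatedPrimes A M) :
    p ∈ associatedPrimes A ↥(H ⊓ M) ∨ ∃ y ∈ M, H.colon {y} = p := by
  obtain ⟨hp, y, rfl⟩ := isAssociatedPrime_iff.mp hpM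
  have hann : ∀ a : A, a ∈ (⊥ : Submodule A M).colon {y} ↔ a • (y : X) = 0 := fun a => by
    simp [mem_colon_singleton, Subtype.ext_iff]
  by_cases hle : H.colon {(y : X)} ≤ (⊥ : Submodule A M).colon {y}
  · refine Or.inr ⟨y, y.2, le_antisymm hle fun a ha => ?_⟩
    rw [mem_colon_singleton, (hann a).mp ha]
    exact H.zero_mem
  · obtain ⟨b, hbH, hbp⟩ := SetLike.not_le_iff_exists.mp hle
    refine Or.inl (mem_associatedPrimes_of_colon_eq
      ⟨mem_colon_singleton.mp hbH, M.smul_mem b y.2⟩ (le_antisymm (fun a ha => ?_) fun a ha => ?_))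
    · rw [mem_colon_singleton, Submodule.mem_bot, smul_smul, ← hann] at ha
      exact (hp.mem_or_mem ha).resolve_right hbp
    · rw [mem_colon_singleton, Submodule.mem_bot, smul_comm, (hann a).mp ha, smul_zero]

section graded

variable {A R X : Type} [CommRing A] [CommRing R] [Algebra A R]
  [AddCommGroup X] [Module A X] [Module R X] [IsScalarTower A R X]
  {p : Ideal A} [p.IsPrime] {S : Set R} {ℳ : ℤ → Submodule A X}

theorem exists_mem_pow_smul_mem_colon_H0_eq (hI : (Ideal.span S).FG)
    (hS : ∀ n, ∀ r ∈ S, ∀ x ∈ ℳ n, r • x ∈ ℳ (n + 1)) {n : ℤ} {x : X} (hx : x ∈ ℳ n)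
    (hxp : ((H0 (Ideal.span S) X).restrictScalars A).colon {x} = p) (k : ℕ) :
    ∃ g ∈ Ideal.span S ^ k, g • x ∈ ℳ (n + k) ∧
      ((H0 (Ideal.span S) X).restrictScalars A).colon {g • x} = p := by
  induction k with
  | zero => exact ⟨1, by simp, by simpa using hx, by simpa using hxp⟩
  | succ k ih =>
    obtain ⟨g, hg, hgx, hgp⟩ := ih
    obtain ⟨r, hr, hrp⟩ := exists_mem_colon_H0_smul_eq hI hgp
    refine ⟨r * g, ?_, ?_, by rwa [mul_smul]⟩
    · rw [pow_succ']
      exact Ideal.mul_mem_mul (Ideal.subset_span hr) hg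
    · rw [mul_smul, Nat.cast_succ, ← add_assoc]
      exact hS _ r hr _ hgx

theorem eventually_mem_associatedPrimes [IsNoetherianRing A] (hI : (Ideal.span S).FG)
    (hS : ∀ n, ∀ r ∈ S, ∀ x ∈ ℳ n, r • x ∈ ℳ (n + 1)) {n : ℤ} {x : X} (hx : x ∈ ℳ n)
    (hxp : ((H0 (Ideal.span S) X).restrictScalars A).colon {x} = p) :
    ∀ᶠ n' in atTop, p ∈ associatedPrimes A (ℳ n') := by
  obtain ⟨t, ht⟩ := exists_colon_H0_le_colon_torsionBySet_pow (A := A) (Ideal.span S) x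
  refine eventually_atTop.mpr ⟨n + t, fun n' hn' => ?_⟩
  obtain ⟨k, rfl⟩ : ∃ k : ℕ, n' = n + k := ⟨(n' - n).toNat, by omega⟩
  obtain ⟨g, hg, hgx, hgp⟩ := exists_mem_pow_smul_mem_colon_H0_eq hI hS hx hxp k
  refine mem_associatedPrimes_of_colon_eq hgx (le_antisymm ?_ fun a ha => ?_)
  · exact hgp ▸ colon_mono bot_le le_rfl
  · have hax : a • x ∈ torsionBySet R X ((Ideal.span S ^ t : Ideal R) : Set R) :=
      mem_colon_singleton.mp (ht (hxp ▸ ha))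
    rw [mem_colon_singleton, Submodule.mem_bot, smul_comm]
    exact (mem_torsionBySet_iff _ _).mp hax ⟨g, Ideal.pow_le_pow_right (by omega) hg⟩

end graded

theorem stmt4_general (A : Type) [CommRing A] [IsNoetherianRing A]
    (R : Type) [CommRing R] [Algebra A R] [IsNoetherianRing R]
    (𝒜 : ℕ → Submodule A R)
    (X : Type) [AddCommGroup X] [Module A X] [Module R X] [IsScalarTower A R X]
    (ℳ : ℤ → Submodule A X)
    (hsmul : ∀ (i : ℕ) (n : ℤ), ∀ r ∈ 𝒜 i, ∀ x ∈ ℳ n, r • x ∈ ℳ (n + i))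
    (hAssFin : (associatedPrimes A X).Finite)
    (hH0stable : ∃ m : ℤ, ∀ n ≥ m,
      associatedPrimes A ↥((H0 (Ideal.span (𝒜 1 : Set R)) X).restrictScalars A ⊓ ℳ n) =
      associatedPrimes A ↥((H0 (Ideal.span (𝒜 1 : Set R)) X).restrictScalars A ⊓ ℳ m)) :
    ∃ n₀ : ℤ, ∀ n ≥ n₀, associatedPrimes A (ℳ n) = associatedPrimes A (ℳ n₀) := by
  obtain ⟨m, hm⟩ := hH0stable
  set H := (H0 (Ideal.span (𝒜 1 : Set R)) X).restrictScalars A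
  set T : Set (Ideal A) := {p | p.IsPrime ∧ ∃ n, ∃ x ∈ ℳ n, H.colon {x} = p}
  have hT : ∀ p ∈ T, ∀ᶠ n in atTop, p ∈ associatedPrimes A (ℳ n) := by
    rintro p ⟨hp, n, x, hx, hxp⟩
    exact eventually_mem_associatedPrimes (IsNoetherian.noetherian _)
      (fun n r hr y hy => by simpa using hsmul 1 n r hr y hy) hx hxp
  have hTfin : T.Finite := hAssFin.subset fun p hp =>
    let ⟨n, hn⟩ := (hT p hp).exists
    associatedPrimes.subset_of_injective (ℳ n).injective_subtype hn
  have hAss : ∀ᶠ n in atTop, associatedPrimes A (ℳ n) = associatedPrimes A ↥(H ⊓ ℳ m) ∪ T := by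
    filter_upwards [eventually_ge_atTop m, (eventually_all_finite hTfin).mpr hT] with n hmn hTn
    refine subset_antisymm (fun p hp => ?_) (Set.union_subset ?_ hTn)
    · rcases mem_associatedPrimes_inf_or_exists_colon_eq hp with hpH | ⟨x, hx, hxp⟩
      · exact Or.inl (hm n hmn ▸ hpH)
      · exact Or.inr ⟨hp.isPrime, n, x, hx, hxp⟩
    · exact hm n hmn ▸ associatedPrimes.subset_of_injective (inclusion_injective inf_le_right)
  obtain ⟨N, hN⟩ := eventually_atTop.mp hAss
  exact ⟨N, fun n hn => (hN n hn).trans (hN N le_rfl).symm⟩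

/-- Let `R` be a standard graded Noetherian ring with `R_0 = A` and `X ∈ *Mod_f(R)`.
Assume `Ass_A X` is finite and the sets `Ass_A H⁰_{R₊}(X)_n` are eventually constant.
Then the sets `Ass_A X_n` are eventually constant. -/
theorem stmt4 (A : Type) [CommRing A] [IsNoetherianRing A]
    (R : Type) [CommRing R] [Algebra A R] [IsNoetherianRing R]
    (𝒜 : ℕ → Submodule A R) [GradedAlgebra 𝒜] (hstd : ∀ n, 𝒜 n = 𝒜 1 ^ n)
    (X : Type) [AddCommGroup X] [Module A X] [Module R X] [IsScalarTower A R X]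
    (ℳ : ℤ → Submodule A X) [DirectSum.Decomposition ℳ]
    (hsmul : ∀ (i : ℕ) (n : ℤ), ∀ r ∈ 𝒜 i, ∀ x ∈ ℳ n, r • x ∈ ℳ (n + i))
    (hfg : ∀ n, (ℳ n).FG) (hvan : ∃ n₀ : ℤ, ∀ n < n₀, ℳ n = ⊥)
    (hAssFin : (associatedPrimes A X).Finite)
    (hH0stable : ∃ m : ℤ, ∀ n ≥ m,
      associatedPrimes A ↥((H0 (Ideal.span (𝒜 1 : Set R)) X).restrictScalars A ⊓ ℳ n) =
      associatedPrimes A ↥((H0 (Ideal.span (𝒜 1 : Set R)) X).restrictScalars A ⊓ ℳ m)) :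
    ∃ n₀ : ℤ, ∀ n ≥ n₀, associatedPrimes A (ℳ n) = associatedPrimes A (ℳ n₀) :=
  stmt4_general A R 𝒜 X ℳ hsmul hAssFin hH0stable
end

section
/- Let R be a standard graded Noetherian ring with R_0 = A. Suppose 0 → Y → Z → D → 0 is an exact sequence of graded R-modules with Y ∈ 𝔄(R) and D a finitely generated graded R-module. Then Z ∈ 𝔄(R). -/
/-- Data of a standard graded algebra extension `S ⊇ R` (given by an injective graded
`A`-algebra map `f : R → S`) together with a finitely generated graded `S`-module `N`
and a finitely generated graded `R`-submodule `M ⊆ N`. -/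
structure ExtData (A : Type) [CommRing A] (R : Type) [CommRing R] [Algebra A R]
    (𝒜 : ℕ → Submodule A R) where
  S : Type
  [ringS : CommRing S]
  [algS : Algebra A S]
  ℬ : ℕ → Submodule A S
  [gradedS : GradedAlgebra ℬ]
  standardS : ∀ n, ℬ n = ℬ 1 ^ n
  f : R →ₐ[A] S
  f_inj : Function.Injective f
  f_graded : ∀ (n : ℕ), ∀ r ∈ 𝒜 n, f r ∈ ℬ n
  N : Type
  [acgN : AddCommGroup N]
  [modAN : Module A N]
  [modSN : Module S N]
  [towSN : IsScalarTower A S N]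
  finN : Module.Finite S N
  𝒩 : ℤ → Submodule A N
  [decN : DirectSum.Decomposition 𝒩]
  smulN : ∀ (i : ℕ) (n : ℤ), ∀ s ∈ ℬ i, ∀ x ∈ 𝒩 n, s • x ∈ 𝒩 (n + i)
  [modRN : Module R N]
  [towRN : IsScalarTower A R N]
  compat : ∀ (r : R) (x : N), r • x = f r • x
  M : Submodule R N
  M_fg : M.FG
  M_graded : ∀ x ∈ M, ∀ n : ℤ, (DirectSum.decompose 𝒩 x n : N) ∈ M

attribute [instance] ExtData.ringS ExtData.algS ExtData.gradedS ExtData.acgN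
  ExtData.modAN ExtData.modSN ExtData.towSN ExtData.decN ExtData.modRN ExtData.towRN

/-- `Y` is a graded (homogeneous) `R`-submodule of the graded module `(X, ℳ)`. -/
def IsGradedSub (A : Type) [CommRing A] (R : Type) [CommRing R] [Algebra A R]
    (X : Type) [AddCommGroup X] [Module A X] [Module R X] [IsScalarTower A R X]
    (ℳ : ℤ → Submodule A X) (Y : Submodule R X) : Prop :=
  Y.restrictScalars A = ⨆ n : ℤ, (Y.restrictScalars A ⊓ ℳ n)

/-- Membership in `𝔄(R)(1)`: the graded `R`-module `(X, ℳ)` is isomorphic, as a graded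
`R`-module, to a quotient `N/M` coming from some `ExtData`. -/
def InA1 (A : Type) [CommRing A] (R : Type) [CommRing R] [Algebra A R]
    (𝒜 : ℕ → Submodule A R)
    (X : Type) [AddCommGroup X] [Module A X] [Module R X] [IsScalarTower A R X]
    (ℳ : ℤ → Submodule A X) : Prop :=
  ∃ (D : ExtData A R 𝒜) (e : X ≃ₗ[R] (D.N ⧸ D.M)),
    ∀ n : ℤ, e '' (ℳ n : Set X) = D.M.mkQ '' (D.𝒩 n : Set D.N)

/-- Membership in `𝔄(R) = 𝔄(R)(2)`: there is a graded submodule `Y ⊆ X` with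
`Y ∈ 𝔄(R)(1)` (with the induced grading) and `X/Y` finitely generated over `R`. -/
def InA (A : Type) [CommRing A] (R : Type) [CommRing R] [Algebra A R]
    (𝒜 : ℕ → Submodule A R)
    (X : Type) [AddCommGroup X] [Module A X] [Module R X] [IsScalarTower A R X]
    (ℳ : ℤ → Submodule A X) : Prop :=
  ∃ Y : Submodule R X,
    IsGradedSub A R X ℳ Y ∧
    InA1 A R 𝒜 ↥Y (fun n => (ℳ n).comap (Y.subtype.restrictScalars A)) ∧
    Module.Finite R (X ⧸ Y)

/-- Let `R` be a standard graded Noetherian ring with `R_0 = A`.  If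
`0 → Y → Z → D → 0` is an exact sequence of graded `R`-modules with `Y ∈ 𝔄(R)`
(encoded: `Y` is a graded submodule of `Z` lying in `𝔄(R)` with the induced grading)
and `D = Z/Y` finitely generated graded over `R`, then `Z ∈ 𝔄(R)`. -/
theorem stmt9 (A : Type) [CommRing A] [IsNoetherianRing A]
    (R : Type) [CommRing R] [Algebra A R] [IsNoetherianRing R]
    (𝒜 : ℕ → Submodule A R) [GradedAlgebra 𝒜] (hstd : ∀ n, 𝒜 n = 𝒜 1 ^ n)
    (Z : Type) [AddCommGroup Z] [Module A Z] [Module R Z] [IsScalarTower A R Z]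
    (ℳ : ℤ → Submodule A Z) [DirectSum.Decomposition ℳ]
    (hsmul : ∀ (i : ℕ) (n : ℤ), ∀ r ∈ 𝒜 i, ∀ x ∈ ℳ n, r • x ∈ ℳ (n + i))
    (Y : Submodule R Z) (hYgr : IsGradedSub A R Z ℳ Y)
    (hY : InA A R 𝒜 ↥Y (fun n => (ℳ n).comap (Y.subtype.restrictScalars A)))
    (hD : Module.Finite R (Z ⧸ Y)) :
    InA A R 𝒜 Z ℳ := by
  obtain ⟨W, hWgr, hW1, hWfin⟩ := hY
  refine ⟨W.map Y.subtype, ?_, ?_, ?_⟩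
  · -- graded submodule
    unfold IsGradedSub at hWgr ⊢
    set g := Y.subtype.restrictScalars A with hg
    have hmap : (W.map Y.subtype).restrictScalars A = (W.restrictScalars A).map g := by
      ext z
      simp [Submodule.mem_map, hg]
    have key : ∀ n : ℤ,
        ((W.restrictScalars A ⊓ (ℳ n).comap g).map g)
          = (W.restrictScalars A).map g ⊓ ℳ n := by
      intro n
      ext z
      simp only [Submodule.mem_map, Submodule.mem_inf, Submodule.mem_comap]
      constructor
      · rintro ⟨w, ⟨hw1, hw2⟩, rfl⟩; exact ⟨⟨w, hw1, rfl⟩, hw2⟩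
      · rintro ⟨⟨w, hw1, rfl⟩, hz⟩; exact ⟨w, ⟨hw1, hz⟩, rfl⟩
    calc (W.map Y.subtype).restrictScalars A = (W.restrictScalars A).map g := hmap
      _ = (⨆ n : ℤ, W.restrictScalars A ⊓ (ℳ n).comap g).map g := by rw [← hWgr]
      _ = ⨆ n : ℤ, (W.restrictScalars A ⊓ (ℳ n).comap g).map g := Submodule.map_iSup g _
      _ = ⨆ n : ℤ, ((W.map Y.subtype).restrictScalars A ⊓ ℳ n) := by
          refine iSup_congr fun n => ?_
          rw [key n, ← hmap]
  · -- InA1 transported along the isomorphism W ≃ W.map Y.subtype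
    obtain ⟨D, e₁, he₁⟩ := hW1
    set e := Submodule.equivMapOfInjective Y.subtype Y.injective_subtype W with he
    have hcoe : ∀ x : W, ((e x : Z)) = ((x : Y) : Z) := fun x =>
      Submodule.coe_equivMapOfInjective_apply Y.subtype Y.injective_subtype W x
    have hcoe2 : ∀ x : ↥(W.map Y.subtype), (((e.symm x : W) : Y) : Z) = (x : Z) := fun x => by
      rw [← hcoe (e.symm x), e.apply_symm_apply]
    refine ⟨D, e.symm.trans e₁, fun n => ?_⟩
    have hset : ⇑e.symm ''
        (((ℳ n).comap ((W.map Y.subtype).subtype.restrictScalars A)) : Set ↥(W.map Y.subtype))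
        = ((((ℳ n).comap (Y.subtype.restrictScalars A)).comap
            (W.subtype.restrictScalars A)) : Set ↥W) := by
      ext w
      simp only [Set.mem_image, SetLike.mem_coe, Submodule.mem_comap,
        LinearMap.coe_restrictScalars, Submodule.coe_subtype]
      constructor
      · rintro ⟨x, hx, rfl⟩
        rwa [hcoe2 x]
      · intro hw
        exact ⟨e w, by rw [hcoe w]; exact hw, e.symm_apply_apply w⟩
    calc ⇑(e.symm.trans e₁) ''
          (((ℳ n).comap ((W.map Y.subtype).subtype.restrictScalars A)) : Set ↥(W.map Y.subtype))
        = ⇑e₁ '' (⇑e.symm ''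
          (((ℳ n).comap ((W.map Y.subtype).subtype.restrictScalars A)) : Set ↥(W.map Y.subtype))) := by
          rw [← Set.image_comp]; rfl
      _ = ⇑D.M.mkQ '' (D.𝒩 n : Set D.N) := by rw [hset]; exact he₁ n
  · -- finiteness of Z ⧸ W.map Y.subtype
    set W' := W.map Y.subtype with hW'
    have hle : W' ≤ Y := Submodule.map_subtype_le Y W
    have hle' : W' ≤ LinearMap.ker Y.mkQ := by rwa [Submodule.ker_mkQ]
    set f : (Z ⧸ W') →ₗ[R] Z ⧸ Y := W'.liftQ Y.mkQ hle' with hf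
    have hWsub : W ≤ LinearMap.ker (W'.mkQ.comp Y.subtype) := by
      intro w hw
      simp only [LinearMap.mem_ker, LinearMap.comp_apply, Submodule.mkQ_apply,
        Submodule.Quotient.mk_eq_zero]
      exact Submodule.mem_map_of_mem hw
    set gq : (↥Y ⧸ W) →ₗ[R] Z ⧸ W' := W.liftQ (W'.mkQ.comp Y.subtype) hWsub with hgq
    have hrangeg : LinearMap.range gq = Y.map W'.mkQ := by
      rw [hgq, Submodule.range_liftQ, LinearMap.range_comp, Submodule.range_subtype]
    have hkerf : LinearMap.ker f = Y.map W'.mkQ := by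
      rw [hf, Submodule.ker_liftQ, Submodule.ker_mkQ]
    rw [Module.finite_def]
    refine Submodule.fg_of_fg_map_of_fg_inf_ker f ?_ ?_
    · rw [Submodule.map_top, hf, Submodule.range_liftQ, Submodule.range_mkQ]
      exact Module.finite_def.mp hD
    · rw [top_inf_eq, hkerf, ← hrangeg, LinearMap.range_eq_map]
      exact (Module.finite_def.mp hWfin).map gq
end

section
/- Let R be a standard graded Noetherian ring with R_0 = A, let X ∈ 𝔄(R), and let D be a finitely generated graded R-submodule of X. Then X/D ∈ 𝔄(R). -/
/-! `Y ⊆ X` witnessing `X ∈ 𝔄(R)` maps onto `Y' = (Y + D)/D ⊆ X/D`, and `(X/D)/Y'` is a quotient of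
`X/Y`. If `π : N → Y` is the graded surjection with kernel `M` presenting `Y ∈ 𝔄(R)(1)`, then the
composite `N → Y → Y'` is a graded surjection whose kernel `π⁻¹(D)` is again finitely generated
(an extension of the finitely generated `π⁻¹(D)/M ≅ Y ∩ D ⊆ D` by `M`, over the Noetherian `R`) and
graded (`π` commutes with taking homogeneous components, and `D` is graded), so `Y' ≅ N/π⁻¹(D)`
lies in `𝔄(R)(1)`. -/

open DirectSum
open LinearMap (ker)

theorem Submodule.FG.comap_of_fg_ker {R M P : Type*} [CommRing R] [IsNoetherianRing R]
    [AddCommGroup M] [Module R M] [AddCommGroup P] [Module R P] {f : M →ₗ[R] P}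
    {q : Submodule R P} (hq : q.FG) (hf : (ker f).FG) : (q.comap f).FG := by
  refine Submodule.fg_of_fg_map_of_fg_inf_ker f ?_ ?_
  · rw [Submodule.map_comap_eq]
    exact hq.of_le inf_le_right
  · rwa [inf_eq_right.mpr (LinearMap.ker_le_comap f)]

theorem Module.Finite.quotient_map_of_surjective {R X Z : Type*} [CommRing R]
    [AddCommGroup X] [Module R X] [AddCommGroup Z] [Module R Z] {Y : Submodule R X}
    [Module.Finite R (X ⧸ Y)] {f : X →ₗ[R] Z} (hf : Function.Surjective f) :
    Module.Finite R (Z ⧸ Y.map f) := by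
  refine Module.Finite.of_surjective (Y.mapQ (Y.map f) f (Submodule.le_comap_map f Y)) ?_
  intro c
  obtain ⟨z, rfl⟩ := Submodule.mkQ_surjective _ c
  obtain ⟨x, rfl⟩ := hf z
  exact ⟨Submodule.Quotient.mk x, rfl⟩

theorem DirectSum.decompose_map_of_mapsTo {ι A N X : Type*} [DecidableEq ι] [Semiring A]
    [AddCommMonoid N] [Module A N] [AddCommMonoid X] [Module A X]
    {𝒩 : ι → Submodule A N} {ℳ : ι → Submodule A X} [Decomposition 𝒩] [Decomposition ℳ]
    (g : N →+ X) (hg : ∀ i, ∀ z ∈ 𝒩 i, g z ∈ ℳ i) (z : N) (i : ι) :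
    (decompose ℳ (g z) i : X) = g (decompose 𝒩 z i) := by
  induction z using Decomposition.inductionOn 𝒩 with
  | zero => simp
  | @homogeneous j z =>
    obtain ⟨z, hz⟩ := z
    by_cases h : j = i
    · subst h
      rw [decompose_of_mem_same ℳ (hg j z hz), decompose_of_mem_same 𝒩 hz]
    · rw [decompose_of_mem_ne ℳ (hg j z hz) h, decompose_of_mem_ne 𝒩 hz h, map_zero]
  | add z₁ z₂ h₁ h₂ => simp only [map_add, decompose_add, add_apply, Submodule.coe_add, h₁, h₂]

section Graded

variable {A R : Type} [CommRing A] [CommRing R] [Algebra A R] {𝒜 : ℕ → Submodule A R}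
  {X : Type} [AddCommGroup X] [Module A X] [Module R X] [IsScalarTower A R X]
  {ℳ : ℤ → Submodule A X}
  {Z : Type} [AddCommGroup Z] [Module A Z] [Module R Z] [IsScalarTower A R Z]
  {𝒵 : ℤ → Submodule A Z}

theorem IsGradedSub.isHomogeneous [Decomposition ℳ] {Y : Submodule R X}
    (hY : IsGradedSub A R X ℳ Y) : SetLike.IsHomogeneous ℳ Y := by
  intro n x hx
  have hx' : x ∈ ⨆ k, Y.restrictScalars A ⊓ ℳ k := hY ▸ hx
  refine Submodule.iSup_induction _ (motive := fun y => (decompose ℳ y n : X) ∈ Y) hx'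
    (fun k y ⟨hyY, hyk⟩ => ?_) (by simp) (fun y₁ y₂ h₁ h₂ => ?_)
  · by_cases h : k = n
    · subst h; rwa [decompose_of_mem_same ℳ hyk]
    · rw [decompose_of_mem_ne ℳ hyk h]; exact zero_mem Y
  · rw [decompose_add, DirectSum.add_apply, Submodule.coe_add]; exact add_mem h₁ h₂

theorem IsGradedSub.mkQ_decompose_eq [Decomposition ℳ] {D : Submodule R X}
    (hD : IsGradedSub A R X ℳ D) {x m : X} {n : ℤ} (hm : m ∈ ℳ n) (h : D.mkQ x = D.mkQ m) :
    D.mkQ (decompose ℳ x n) = D.mkQ m := by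
  rw [Submodule.mkQ_apply, Submodule.mkQ_apply, Submodule.Quotient.eq] at h ⊢
  have := hD.isHomogeneous n h
  rwa [decompose_sub, DirectSum.sub_apply, Submodule.coe_sub, decompose_of_mem_same ℳ hm] at this

theorem IsGradedSub.map {Y : Submodule R X} (hY : IsGradedSub A R X ℳ Y) (f : X →ₗ[R] Z) :
    IsGradedSub A R Z (fun n => (ℳ n).map (f.restrictScalars A)) (Y.map f) := by
  refine le_antisymm ?_ (iSup_le fun n => inf_le_left)
  rw [Submodule.restrictScalars_map]
  conv_lhs => rw [hY, Submodule.map_iSup]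
  exact iSup_mono fun n => Submodule.map_inf_le _

theorem InA1.exists_surjective (h : InA1 A R 𝒜 Z 𝒵) :
    ∃ (E : ExtData A R 𝒜) (π : E.N →ₗ[R] Z), Function.Surjective π ∧ ker π = E.M ∧
      ∀ n, π '' (E.𝒩 n : Set E.N) = 𝒵 n := by
  obtain ⟨E, e, he⟩ := h
  refine ⟨E, e.symm.toLinearMap ∘ₗ E.M.mkQ, e.symm.surjective.comp E.M.mkQ_surjective, ?_,
    fun n => ?_⟩
  · rw [LinearEquiv.ker_comp, Submodule.ker_mkQ]
  · rw [LinearMap.coe_comp, Set.image_comp, ← he n]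
    exact e.toEquiv.symm_image_image _

theorem inA1_of_surjective (E : ExtData A R 𝒜) (π : E.N →ₗ[R] Z) (hπ : Function.Surjective π)
    (hfg : (ker π).FG) (hgr : SetLike.IsHomogeneous E.𝒩 (ker π))
    (him : ∀ n, π '' (E.𝒩 n : Set E.N) = 𝒵 n) : InA1 A R 𝒜 Z 𝒵 := by
  refine ⟨{ E with M := ker π, M_fg := hfg, M_graded := fun z hz n => hgr n hz },
    (π.quotKerEquivOfSurjective hπ).symm, fun n => ?_⟩
  rw [← him n, Set.image_image]
  refine Set.image_congr fun z _ => ?_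
  rw [LinearEquiv.symm_apply_eq]
  exact (π.quotKerEquivOfSurjective_apply_mk hπ z).symm

theorem InA1.map_mkQ [IsNoetherianRing R] [Decomposition ℳ] {Y D : Submodule R X}
    (hY : InA1 A R 𝒜 Y (fun n => (ℳ n).comap (Y.subtype.restrictScalars A)))
    (hDfg : D.FG) (hDgr : IsGradedSub A R X ℳ D) :
    InA1 A R 𝒜 (Y.map D.mkQ) (fun n => ((ℳ n).map (D.mkQ.restrictScalars A)).comap
      ((Y.map D.mkQ).subtype.restrictScalars A)) := by
  obtain ⟨E, π, hπ, hker, him⟩ := hY.exists_surjective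
  let ι : E.N →ₗ[R] X := Y.subtype ∘ₗ π
  have hι : ∀ n, ∀ z ∈ E.𝒩 n, ι z ∈ ℳ n := fun n z hz =>
    (him n).subset (Set.mem_image_of_mem π hz)
  have hιdec (z : E.N) (n : ℤ) : (decompose ℳ (ι z) n : X) = ι (decompose E.𝒩 z n) :=
    decompose_map_of_mapsTo ι.toAddMonoidHom hι z n
  let φ : E.N →ₗ[R] Y.map D.mkQ := D.mkQ.submoduleMap Y ∘ₗ π
  have hφker : ker φ = D.comap ι := by
    ext z
    simp only [LinearMap.mem_ker, Submodule.mem_comap, φ, ι, LinearMap.comp_apply,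
      ← Submodule.coe_eq_zero, LinearMap.submoduleMap_coe_apply, Submodule.mkQ_apply,
      Submodule.Quotient.mk_eq_zero, Submodule.subtype_apply]
  refine inA1_of_surjective E φ ((D.mkQ.submoduleMap_surjective Y).comp hπ) ?_ ?_ ?_
  · rw [hφker]
    refine hDfg.comap_of_fg_ker ?_
    rw [LinearMap.ker_comp_of_ker_eq_bot _ Y.ker_subtype, hker]
    exact E.M_fg
  · intro n z hz
    rw [hφker] at hz ⊢
    rw [Submodule.mem_comap, ← hιdec]
    exact hDgr.isHomogeneous n hz
  · intro n
    ext v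
    constructor
    · rintro ⟨z, hz, rfl⟩
      exact ⟨ι z, hι n z hz, rfl⟩
    · rintro ⟨m, hm, hmv⟩
      obtain ⟨z, rfl⟩ := (D.mkQ.submoduleMap_surjective Y).comp hπ v
      have hmv : D.mkQ (ι z) = D.mkQ m := hmv.symm
      refine ⟨decompose E.𝒩 z n, (decompose E.𝒩 z n).2, Subtype.ext ?_⟩
      change D.mkQ (ι (decompose E.𝒩 z n)) = D.mkQ (ι z)
      rw [← hιdec, hDgr.mkQ_decompose_eq hm hmv, hmv]

end Graded

theorem stmt10_general (A : Type) [CommRing A]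
    (R : Type) [CommRing R] [Algebra A R] [IsNoetherianRing R]
    (𝒜 : ℕ → Submodule A R)
    (X : Type) [AddCommGroup X] [Module A X] [Module R X] [IsScalarTower A R X]
    (ℳ : ℤ → Submodule A X) [DirectSum.Decomposition ℳ]
    (hX : InA A R 𝒜 X ℳ)
    (D : Submodule R X) (hDfg : D.FG) (hDgr : IsGradedSub A R X ℳ D) :
    InA A R 𝒜 (X ⧸ D) (fun n => (ℳ n).map (D.mkQ.restrictScalars A)) := by
  obtain ⟨Y, hY, hY1, _⟩ := hX
  exact ⟨Y.map D.mkQ, hY.map D.mkQ, hY1.map_mkQ hDfg hDgr,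
    Module.Finite.quotient_map_of_surjective D.mkQ_surjective⟩

/-- Let `R` be a standard graded Noetherian ring with `R_0 = A`, `X ∈ 𝔄(R)` a graded
`R`-module and `D ⊆ X` a finitely generated graded `R`-submodule.  Then
`X/D ∈ 𝔄(R)` (with the quotient grading). -/
theorem stmt10 (A : Type) [CommRing A] [IsNoetherianRing A]
    (R : Type) [CommRing R] [Algebra A R] [IsNoetherianRing R]
    (𝒜 : ℕ → Submodule A R) [GradedAlgebra 𝒜] (hstd : ∀ n, 𝒜 n = 𝒜 1 ^ n)
    (X : Type) [AddCommGroup X] [Module A X] [Module R X] [IsScalarTower A R X]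
    (ℳ : ℤ → Submodule A X) [DirectSum.Decomposition ℳ]
    (hsmul : ∀ (i : ℕ) (n : ℤ), ∀ r ∈ 𝒜 i, ∀ x ∈ ℳ n, r • x ∈ ℳ (n + i))
    (hX : InA A R 𝒜 X ℳ)
    (D : Submodule R X) (hDfg : D.FG) (hDgr : IsGradedSub A R X ℳ D) :
    InA A R 𝒜 (X ⧸ D) (fun n => (ℳ n).map (D.mkQ.restrictScalars A)) :=
  stmt10_general A R 𝒜 X ℳ hX D hDfg hDgr
end

section
/- Let A be a Noetherian ring, I an ideal, and M a finitely generated A-module. Then the sets Ass_A(I^n M / I^{n+1} M) and Ass_A(M / I^n M) are eventually constant in n (Brodmann's theorem), as a consequence of the stability of Ass_A X_n for X a finitely generated graded module over the Rees algebra R(I) = ⨁_{n≥0} I^n. -/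
/-!
The graded pieces `grₙ = IⁿM / Iⁿ⁺¹M` are the homogeneous components of the associated graded
module of the `I`-adic filtration, a finite module over the Noetherian Rees algebra; a prime
filtration of it over the Rees algebra shows that its `Ass_A` is finite, so all the sets
`Ass_A grₙ` lie in one finite set. For a fixed prime `p`, let `Eₙ ⊆ IⁿM` be the preimage of the
`p`-torsion of `grₙ`; then `p ∈ Ass_A grₙ` iff some element of `Eₙ` stays nonzero in `(grₙ)_p`.
The `Eₙ` form an `I`-filtration inside a stable one, hence are stable by Artin–Rees, and
`Eₙ₊₁ = I Eₙ` shows that `p ∉ Ass_A grₙ` propagates from `n` to `n + 1`. So membership of each of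
the finitely many candidate primes is eventually constant.

For `M / IⁿM`, the exact sequences `0 → grₙ → M/Iⁿ⁺¹M → M/IⁿM → 0` give
`Ass_A grₙ ⊆ Ass_A (M/Iⁿ⁺¹M) ⊆ Ass_A grₙ ∪ Ass_A (M/IⁿM)`; once `Ass_A grₙ` is constant, this
makes `Ass_A (M/IⁿM)` a decreasing sequence of finite sets.
-/

open Filter Submodule

theorem Filter.eventuallyConst_atTop_of_succ_imp {P : ℕ → Prop} (d : ℕ)
    (h : ∀ n ≥ d, P (n + 1) → P n) : EventuallyConst P atTop := by
  by_cases! hP : ∃ m ≥ d, ¬ P m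
  · obtain ⟨m, hm, hPm⟩ := hP
    have : ∀ n ≥ m, ¬ P n := fun n hn => by
      induction n, hn using Nat.le_induction with
      | base => exact hPm
      | succ n hn ih => exact fun h' => ih (h n (hm.trans hn) h')
    exact eventuallyConst_pred.2 (Or.inr (eventually_atTop.2 ⟨m, this⟩))
  · exact eventuallyConst_pred.2 (Or.inl (eventually_atTop.2 ⟨d, hP⟩))

theorem Filter.EventuallyConst.of_subset_finite {ι α : Type*} {l : Filter ι} {f : ι → Set α}
    {S : Set α} (hS : S.Finite) (hf : ∀ᶠ i in l, f i ⊆ S)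
    (h : ∀ a ∈ S, EventuallyConst (fun i => a ∈ f i) l) : EventuallyConst f l := by
  set T := {a | a ∈ S ∧ ∀ᶠ i in l, a ∈ f i}
  have key : ∀ a ∈ S, ∀ᶠ i in l, (a ∈ f i ↔ a ∈ T) := fun a ha => by
    by_cases haT : a ∈ T
    · filter_upwards [haT.2] with i hi using iff_of_true hi haT
    · have : ∀ᶠ i in l, a ∉ f i :=
        (eventuallyConst_pred.1 (h a ha)).resolve_left fun h' => haT ⟨ha, h'⟩
      filter_upwards [this] with i hi using iff_of_false hi haT
  refine eventuallyConst_iff_exists_eventuallyEq.2 ⟨T, ?_⟩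
  filter_upwards [hf, (eventually_all_finite hS).2 key] with i hfi hi
  ext a
  exact ⟨fun ha => (hi a (hfi ha)).1 ha, fun ha => (hi a ha.1).2 ha⟩

section Subquotient

variable {R M : Type*} [CommRing R] [AddCommGroup M] [Module R M]

theorem Submodule.injective_mapQ_subtype (K L : Submodule R M) :
    Function.Injective ((L.comap K.subtype).mapQ L K.subtype le_rfl) :=
  LinearMap.ker_eq_bot.mp (by rw [ker_mapQ, mkQ_map_self])

theorem Submodule.exact_mapQ_subtype_factor {K L : Submodule R M} (h : L ≤ K) :
    Function.Exact ((L.comap K.subtype).mapQ L K.subtype le_rfl) (factor h) := by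
  rw [LinearMap.exact_iff, range_mapQ, range_subtype, ker_mapQ, comap_id]

theorem associatedPrimes_subquotient_subset (K L : Submodule R M) :
    associatedPrimes R (K ⧸ L.comap K.subtype) ⊆ associatedPrimes R (M ⧸ L) :=
  associatedPrimes.subset_of_injective (injective_mapQ_subtype K L)

theorem associatedPrimes_quotient_subset_union {K L : Submodule R M} (h : L ≤ K) :
    associatedPrimes R (M ⧸ L) ⊆
      associatedPrimes R (K ⧸ L.comap K.subtype) ∪ associatedPrimes R (M ⧸ K) :=
  associatedPrimes.subset_union_of_exact (injective_mapQ_subtype K L)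
    (exact_mapQ_subtype_factor h)

theorem mem_associatedPrimes_subquotient_iff [IsNoetherianRing R] {K L : Submodule R M}
    {p : Ideal R} :
    p ∈ associatedPrimes R (K ⧸ L.comap K.subtype) ↔ p.IsPrime ∧ ∃ x ∈ K, p = L.colon {x} := by
  rw [AssociatedPrimes.mem_iff, isAssociatedPrime_iff, (mkQ_surjective _).exists, Subtype.exists]
  have hcolon (x : M) (hx : x ∈ K) :
      (⊥ : Submodule R (K ⧸ L.comap K.subtype)).colon {Submodule.Quotient.mk ⟨x, hx⟩} =
        L.colon {x} := by
    ext a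
    simp [mem_colon_singleton, ← Quotient.mk_smul]
  simp +contextual [hcolon]

end Subquotient

section Algebra

variable {A R : Type*} [CommRing A] [CommRing R] [Algebra A R]

theorem associatedPrimes_quotient_subset_comap (P : Ideal R) [hP : P.IsPrime] :
    associatedPrimes A (R ⧸ P) ⊆ {P.comap (algebraMap A R)} := by
  rintro p ⟨hp, x, rfl⟩
  obtain ⟨x, rfl⟩ := Ideal.Quotient.mk_surjective x
  have hx : x ∉ P := fun hx => hp.ne_top <| by
    simp [Ideal.Quotient.eq_zero_iff_mem.2 hx]
  have hcolon :
      (⊥ : Submodule A (R ⧸ P)).colon {Ideal.Quotient.mk P x} = P.comap (algebraMap A R) := by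
    ext a
    rw [mem_colon_singleton, Submodule.mem_bot, Algebra.smul_def,
      IsScalarTower.algebraMap_apply A R (R ⧸ P), Ideal.Quotient.algebraMap_eq, ← map_mul,
      Ideal.Quotient.eq_zero_iff_mem, Ideal.mem_comap]
    exact ⟨fun h => (hP.mem_or_mem h).resolve_right hx, fun h => P.mul_mem_right x h⟩
  rw [hcolon, (hP.comap (algebraMap A R)).radical]
  rfl

variable (A) in
theorem associatedPrimes.finite_of_isScalarTower [IsNoetherianRing R] (N : Type*) [AddCommGroup N]
    [Module R N] [Module A N] [IsScalarTower A R N] [Module.Finite R N] :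
    (associatedPrimes A N).Finite := by
  revert ‹Module A N› ‹IsScalarTower A R N›
  induction ‹Module.Finite R N› using
    IsNoetherianRing.induction_on_isQuotientEquivQuotientPrime R with
  | subsingleton N => intros; simp [associatedPrimes.eq_empty_of_subsingleton]
  | quotient N P e =>
    intros
    rw [LinearEquiv.AssociatedPrimes.eq (e.restrictScalars A)]
    exact (Set.finite_singleton _).subset (associatedPrimes_quotient_subset_comap P.1)
  | exact N₁ N₂ N₃ f g hf _ hfg h₁ h₃ =>
    intros
    let : Module A N₁ := .compHom N₁ (algebraMap A R)
    let : Module A N₃ := .compHom N₃ (algebraMap A R)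
    have : IsScalarTower A R N₁ := .of_compHom A R N₁
    have : IsScalarTower A R N₃ := .of_compHom A R N₃
    exact (h₁.union h₃).subset <| associatedPrimes.subset_union_of_exact
      (f := f.restrictScalars A) (g := g.restrictScalars A) hf hfg

theorem associatedPrimes_quotient_subset_of_eq_comap {N K : Type*} [AddCommGroup N] [Module R N]
    [Module A N] [IsScalarTower A R N] [AddCommGroup K] [Module A K] {W : Submodule R N}
    {L : Submodule A K} (f : K →ₗ[A] N) (h : L = (W.restrictScalars A).comap f) :
    associatedPrimes A (K ⧸ L) ⊆ associatedPrimes A (N ⧸ W) := by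
  have hker : LinearMap.ker (W.mkQ.restrictScalars A ∘ₗ f) = L := by
    ext x
    simp [h, Quotient.mk_eq_zero]
  exact associatedPrimes.subset_of_injective (f := L.liftQ _ hker.ge)
    (LinearMap.ker_eq_bot.1 (ker_liftQ_eq_bot' _ _ hker.symm))

end Algebra

namespace Ideal.Filtration

variable {A M : Type*} [CommRing A] [AddCommGroup M] [Module A M] {I : Ideal A}
  (F : I.Filtration M)

abbrev GradedPiece (n : ℕ) : Type _ := F.N n ⧸ (F.N (n + 1)).comap (F.N n).subtype

def shift : I.Filtration M where
  N n := F.N (n + 1)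
  mono n := F.mono (n + 1)
  smul_le n := F.smul_le (n + 1)

theorem single_mem_submodule_iff {n : ℕ} {x : M} :
    PolynomialModule.single A n x ∈ F.submodule ↔ x ∈ F.N n := by
  refine ⟨fun h => by simpa using h n, fun h i => ?_⟩
  rcases eq_or_ne n i with rfl | hne
  · simpa using h
  · simp [hne]

noncomputable def singleToSubmodule (n : ℕ) : F.N n →ₗ[A] F.submodule :=
  LinearMap.codRestrict (F.submodule.restrictScalars A)
    (PolynomialModule.lsingle A n ∘ₗ (F.N n).subtype) fun x => F.single_mem_submodule_iff.2 x.2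

/-- The `n`-th term is the preimage in `F.N n` of the `p`-torsion of `F.GradedPiece n`. -/
def torsionBy (p : Ideal A) : I.Filtration M where
  N n := F.N n ⊓ ⨅ a ∈ p, (F.N (n + 1)).comap (LinearMap.lsmul A M a)
  mono n := inf_le_inf (F.mono n) (iInf₂_mono fun _ _ => Submodule.comap_mono (F.mono (n + 1)))
  smul_le n := by
    refine le_inf ((smul_mono_right _ inf_le_left).trans (F.smul_le n)) (le_iInf₂ fun a ha => ?_)
    refine Submodule.smul_le.2 fun r hr x hx => ?_
    have hax : a • x ∈ F.N (n + 1) := by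
      simp only [Submodule.mem_inf, Submodule.mem_iInf, Submodule.mem_comap,
        LinearMap.lsmul_apply] at hx
      exact hx.2 a ha
    show a • r • x ∈ F.N (n + 1 + 1)
    rw [smul_comm]
    exact F.smul_le (n + 1) (smul_mem_smul hr hax)

theorem mem_torsionBy_iff {p : Ideal A} {n : ℕ} {x : M} :
    x ∈ (F.torsionBy p).N n ↔ x ∈ F.N n ∧ p ≤ (F.N (n + 1)).colon {x} := by
  simp [torsionBy, SetLike.le_def, mem_colon_singleton]

theorem torsionBy_le (p : Ideal A) : F.torsionBy p ≤ F := fun _ => inf_le_left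

section Noetherian

variable [IsNoetherianRing A]

theorem mem_associatedPrimes_gradedPiece_iff {p : Ideal A} (hp : p.IsPrime) (n : ℕ) :
    p ∈ associatedPrimes A (F.GradedPiece n) ↔
      ∃ x ∈ (F.torsionBy p).N n, (F.N (n + 1)).colon {x} ≤ p := by
  simp only [mem_associatedPrimes_subquotient_iff, hp, true_and, mem_torsionBy_iff, and_assoc,
    le_antisymm_iff, and_comm (a := p ≤ _)]

theorem mem_associatedPrimes_gradedPiece_of_succ {p : Ideal A} (hp : p.IsPrime) {n : ℕ}
    (hn : I • (F.torsionBy p).N n = (F.torsionBy p).N (n + 1))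
    (h : p ∈ associatedPrimes A (F.GradedPiece (n + 1))) :
    p ∈ associatedPrimes A (F.GradedPiece n) := by
  rw [F.mem_associatedPrimes_gradedPiece_iff hp] at h ⊢
  contrapose! h
  intro y hy
  rw [← hn] at hy
  refine Submodule.smul_induction_on hy (fun r hr x hx => ?_) fun x y hx hy => ?_
  · obtain ⟨a, hax, ha⟩ := SetLike.not_le_iff_exists.1 (h x hx)
    refine SetLike.not_le_iff_exists.2 ⟨a, ?_, ha⟩
    rw [mem_colon_singleton, smul_comm]
    exact F.smul_le (n + 1) (smul_mem_smul hr (mem_colon_singleton.1 hax))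
  · obtain ⟨a, hax, ha⟩ := SetLike.not_le_iff_exists.1 hx
    obtain ⟨b, hby, hb⟩ := SetLike.not_le_iff_exists.1 hy
    refine SetLike.not_le_iff_exists.2 ⟨a * b, ?_, fun hab => (hp.mem_or_mem hab).elim ha hb⟩
    rw [mem_colon_singleton, smul_add, mul_comm, mul_smul, mul_comm, mul_smul]
    exact add_mem (smul_mem _ b (mem_colon_singleton.1 hax))
      (smul_mem _ a (mem_colon_singleton.1 hby))

variable [Module.Finite A M] {F}

theorem Stable.finite_iUnion_associatedPrimes_gradedPiece (hF : F.Stable) :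
    (⋃ n, associatedPrimes A (F.GradedPiece n)).Finite := by
  have : Module.Finite (reesAlgebra I) F.submodule :=
    .iff_fg.2 ((submodule_fg_iff_stable F fun _ => IsNoetherian.noetherian _).2 hF)
  -- The quotient of `F.submodule` by a `reesAlgebra I`-submodule is only formed inside the
  -- generic lemmas: written here, its `HasQuotient` instance is not found through the
  -- subalgebra's semiring structure.
  have hsubset := fun n => associatedPrimes_quotient_subset_of_eq_comap (R := reesAlgebra I)
    (N := F.submodule) (K := F.N n) (L := (F.N (n + 1)).comap (F.N n).subtype)
    (W := F.shift.submodule.comap F.submodule.subtype) (F.singleToSubmodule n) (by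
      ext x; exact F.shift.single_mem_submodule_iff.symm)
  exact (associatedPrimes.finite_of_isScalarTower (R := reesAlgebra I) A _).subset
    (Set.iUnion_subset hsubset)

theorem Stable.eventuallyConst_mem_associatedPrimes_gradedPiece (hF : F.Stable) {p : Ideal A}
    (hp : p.IsPrime) :
    EventuallyConst (fun n => p ∈ associatedPrimes A (F.GradedPiece n)) atTop := by
  obtain ⟨d, hd⟩ := hF.of_le (F.torsionBy_le p)
  exact eventuallyConst_atTop_of_succ_imp d fun n hn =>
    F.mem_associatedPrimes_gradedPiece_of_succ hp (hd n hn)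

theorem Stable.eventuallyConst_associatedPrimes_gradedPiece (hF : F.Stable) :
    EventuallyConst (fun n => associatedPrimes A (F.GradedPiece n)) atTop :=
  .of_subset_finite hF.finite_iUnion_associatedPrimes_gradedPiece
    (.of_forall (Set.subset_iUnion _)) fun _ hp => by
      obtain ⟨n, hn⟩ := Set.mem_iUnion.1 hp
      exact hF.eventuallyConst_mem_associatedPrimes_gradedPiece hn.isPrime

theorem Stable.eventuallyConst_associatedPrimes_quotient (hF : F.Stable) :
    EventuallyConst (fun n => associatedPrimes A (M ⧸ F.N n)) atTop := by
  obtain ⟨n₀, hn₀⟩ := eventuallyConst_atTop.1 hF.eventuallyConst_associatedPrimes_gradedPiece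
  have hsucc : ∀ n ≥ n₀ + 1,
      associatedPrimes A (M ⧸ F.N (n + 1)) ⊆ associatedPrimes A (M ⧸ F.N n) := by
    intro n hn p hp
    obtain ⟨m, rfl⟩ : ∃ m, n = m + 1 := ⟨n - 1, by omega⟩
    rcases associatedPrimes_quotient_subset_union (F.mono _) hp with h | h
    · rw [hn₀ _ (by omega), ← hn₀ m (by omega)] at h
      exact associatedPrimes_subquotient_subset _ _ h
    · exact h
  have hanti :=
    antitoneOn_nat_Ici_of_succ_le (f := fun n => associatedPrimes A (M ⧸ F.N n)) hsucc
  exact .of_subset_finite (associatedPrimes.finite A (M ⧸ F.N (n₀ + 1)))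
    (eventually_atTop.2 ⟨n₀ + 1, fun n hn => hanti Set.self_mem_Ici hn hn⟩)
    fun _ _ => eventuallyConst_atTop_of_succ_imp (n₀ + 1) fun n hn h => hsucc n hn h

end Noetherian

end Ideal.Filtration

/-- (Brodmann)  Let `A` be a Noetherian ring, `I ⊆ A` an ideal and `M` a finitely
generated `A`-module.  Then the sets `Ass_A (IⁿM/Iⁿ⁺¹M)` and `Ass_A (M/IⁿM)` are
eventually constant in `n`. -/
theorem stmt16 (A : Type) [CommRing A] [IsNoetherianRing A] (I : Ideal A)
    (M : Type) [AddCommGroup M] [Module A M] [Module.Finite A M] :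
    (∃ n₀ : ℕ, ∀ n ≥ n₀,
      associatedPrimes A
        (↥(I ^ n • (⊤ : Submodule A M)) ⧸
          Submodule.comap (I ^ n • (⊤ : Submodule A M)).subtype
            (I ^ (n + 1) • (⊤ : Submodule A M))) =
      associatedPrimes A
        (↥(I ^ n₀ • (⊤ : Submodule A M)) ⧸
          Submodule.comap (I ^ n₀ • (⊤ : Submodule A M)).subtype
            (I ^ (n₀ + 1) • (⊤ : Submodule A M)))) ∧
    (∃ n₁ : ℕ, ∀ n ≥ n₁,
      associatedPrimes A (M ⧸ (I ^ n • (⊤ : Submodule A M))) =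
      associatedPrimes A (M ⧸ (I ^ n₁ • (⊤ : Submodule A M)))) := by
  have hF := I.stableFiltration_stable (⊤ : Submodule A M)
  exact ⟨eventuallyConst_atTop.1 hF.eventuallyConst_associatedPrimes_gradedPiece,
    eventuallyConst_atTop.1 hF.eventuallyConst_associatedPrimes_quotient⟩
end
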